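/- arXiv:2604.21998 — 3 statements merged into one kernel-verified Lean document; each statement's English description precedes it below -/
import Mathlib

section
/- Let N > p, let Q be a real N×p matrix with QᵀQ = I_p, and let D be a diagonal N×N matrix with nonnegative entries such that R = QᵀDQ is invertible; set S = QᵀD²Q. Then the maximum, over vectors τ ∈ ℝ^N with ‖τ‖ = 1 and Qᵀτ = 0, of the quadratic form (QᵀDτ)ᵀ R^{-2} (QᵀDτ) is attained and equals λ_max(R^{-1} S R^{-1}) − 1, where λ_max denotes the largest eigenvalue of a symmetric matrix. -/
/-!
Write `R = QᵀDQ` and `B = DQR⁻¹ - Q`. Then `QᵀB = 0`, `BᵀB = R⁻¹SR⁻¹ - 1`, and on `ker Qᵀ` the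
map `Bᵀ` agrees with `R⁻¹QᵀD`, so the quadratic form is `‖Bᵀτ‖²`. Its maximum over unit
`τ ∈ ker Qᵀ` is therefore `‖B‖² = λ_max(BᵀB) = λ_max(R⁻¹SR⁻¹) - 1`: the upper bound is Rayleigh's
inequality for `BᵀB`, transferred from `B` to `Bᵀ` by Cauchy–Schwarz, and it is attained at
`τ ∝ Bv` for a top eigenvector `v`, which lies in `ker Qᵀ` since `QᵀB = 0`. When `Bv = 0` the
maximum is `0`, attained by any unit vector of `ker Qᵀ`, which is nonzero because `p < N`.
-/

open Matrix

namespace Matrix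

lemma IsSymm.transpose_mul_mul {m n α : Type*} [Fintype m] [CommSemiring α] {D : Matrix m m α}
    (hD : D.IsSymm) (Q : Matrix m n α) : (Qᵀ * D * Q).IsSymm := by
  rw [IsSymm, transpose_mul, transpose_mul, transpose_transpose, hD.eq, Matrix.mul_assoc]

variable {m n α : Type*} [Fintype m] [Fintype n]

lemma mulVec_dotProduct [CommSemiring α] (A : Matrix m n α) (x : n → α) (y : m → α) :
    (A *ᵥ x) ⬝ᵥ y = x ⬝ᵥ Aᵀ *ᵥ y := by
  rw [mulVec_transpose, dotProduct_comm x, ← dotProduct_mulVec, dotProduct_comm]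

lemma mulVec_dotProduct_mulVec [CommSemiring α] (A : Matrix m n α) (x y : n → α) :
    (A *ᵥ x) ⬝ᵥ (A *ᵥ y) = x ⬝ᵥ (Aᵀ * A) *ᵥ y := by
  rw [mulVec_dotProduct, mulVec_mulVec]

lemma dotProduct_sq_le_dotProduct_self_mul_dotProduct_self [CommRing α] [LinearOrder α]
    [IsStrictOrderedRing α] (v w : n → α) :
    (v ⬝ᵥ w) ^ 2 ≤ (v ⬝ᵥ v) * (w ⬝ᵥ w) :=
  Finset.sum_sq_le_sum_mul_sum_of_sq_le_mul _ (fun _ _ ↦ mul_self_nonneg _)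
    (fun _ _ ↦ mul_self_nonneg _) (fun _ _ ↦ (by ring : _ = _).le)

lemma dotProduct_self_nonneg [Ring α] [LinearOrder α] [IsStrictOrderedRing α] (v : n → α) :
    0 ≤ v ⬝ᵥ v :=
  Finset.sum_nonneg fun i _ ↦ mul_self_nonneg (v i)

lemma exists_smul_dotProduct_self_eq_one {v : n → ℝ} (hv : v ≠ 0) :
    ∃ c : ℝ, (c • v) ⬝ᵥ (c • v) = 1 := by
  have hpos : 0 < v ⬝ᵥ v :=
    (dotProduct_self_nonneg v).lt_of_ne (Ne.symm (dotProduct_self_eq_zero.not.mpr hv))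
  refine ⟨(√(v ⬝ᵥ v))⁻¹, ?_⟩
  rw [smul_dotProduct, dotProduct_smul, smul_eq_mul, smul_eq_mul, ← mul_assoc, ← sq, inv_pow,
    Real.sq_sqrt hpos.le, inv_mul_cancel₀ hpos.ne']

lemma dotProduct_diagonal_mulVec_le_iSup [DecidableEq n] (w x : n → ℝ) :
    x ⬝ᵥ diagonal w *ᵥ x ≤ (⨆ i, w i) * (x ⬝ᵥ x) := by
  simp only [dotProduct, mulVec_diagonal, Finset.mul_sum]
  refine Finset.sum_le_sum fun i _ ↦ ?_
  nlinarith [le_ciSup (Set.finite_range w).bddAbove i, mul_self_nonneg (x i)]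

lemma IsHermitian.dotProduct_mulVec_le_iSup_eigenvalues [DecidableEq n] {M : Matrix n n ℝ}
    (hM : M.IsHermitian) (x : n → ℝ) :
    x ⬝ᵥ M *ᵥ x ≤ (⨆ i, hM.eigenvalues i) * (x ⬝ᵥ x) := by
  set V : Matrix n n ℝ := (hM.eigenvectorUnitary : Matrix n n ℝ)
  have hVV : V * Vᵀ = 1 := by
    simpa [V, star_eq_conjTranspose] using Unitary.coe_mul_star_self hM.eigenvectorUnitary
  have hM' : M = V * diagonal hM.eigenvalues * Vᵀ := by
    simpa [V, Unitary.conjStarAlgAut_apply, star_eq_conjTranspose] using hM.spectral_theorem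
  have hnorm : (Vᵀ *ᵥ x) ⬝ᵥ (Vᵀ *ᵥ x) = x ⬝ᵥ x := by
    rw [mulVec_dotProduct_mulVec, transpose_transpose, hVV, one_mulVec]
  calc x ⬝ᵥ M *ᵥ x = (Vᵀ *ᵥ x) ⬝ᵥ diagonal hM.eigenvalues *ᵥ (Vᵀ *ᵥ x) := by
        conv_lhs => rw [hM']
        rw [mulVec_dotProduct, transpose_transpose, mulVec_mulVec, mulVec_mulVec]
    _ ≤ _ := by rw [← hnorm]; exact dotProduct_diagonal_mulVec_le_iSup _ _

lemma transpose_mulVec_dotProduct_le [CommRing α] [LinearOrder α] [IsStrictOrderedRing α]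
    {B : Matrix m n α} {c : α} (hc : 0 ≤ c)
    (hB : ∀ x, (B *ᵥ x) ⬝ᵥ (B *ᵥ x) ≤ c * (x ⬝ᵥ x)) (y : m → α) :
    (Bᵀ *ᵥ y) ⬝ᵥ (Bᵀ *ᵥ y) ≤ c * (y ⬝ᵥ y) := by
  set z := Bᵀ *ᵥ y
  have hz : z ⬝ᵥ z = y ⬝ᵥ B *ᵥ z := by
    rw [mulVec_dotProduct, transpose_transpose, dotProduct_comm]
  have hsq : (z ⬝ᵥ z) ^ 2 ≤ (y ⬝ᵥ y) * (c * (z ⬝ᵥ z)) := by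
    nth_rewrite 1 [hz]
    exact (dotProduct_sq_le_dotProduct_self_mul_dotProduct_self _ _).trans
      (mul_le_mul_of_nonneg_left (hB z) (dotProduct_self_nonneg y))
  rcases (dotProduct_self_nonneg z).eq_or_lt with hzero | hpos
  · rw [← hzero]
    exact mul_nonneg hc (dotProduct_self_nonneg y)
  · exact le_of_mul_le_mul_right (by linarith) hpos

lemma exists_ne_zero_mulVec_eq_zero {K k : Type*} [Field K] [Fintype k] {A : Matrix k m K}
    (h : Fintype.card k < Fintype.card m) : ∃ v ≠ 0, A *ᵥ v = 0 := by
  obtain ⟨v, hv, hne⟩ := Submodule.exists_mem_ne_zero_of_ne_bot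
    (LinearMap.ker_ne_bot_of_finrank_lt (f := A.mulVecLin) (by simpa using h))
  exact ⟨v, hne, hv⟩

lemma IsHermitian.exists_mulVec_eq_iSup_eigenvalues_smul [DecidableEq n] [Nonempty n]
    {M : Matrix n n ℝ} (hM : M.IsHermitian) :
    ∃ v : n → ℝ, v ⬝ᵥ v = 1 ∧ M *ᵥ v = (⨆ i, hM.eigenvalues i) • v := by
  obtain ⟨i, hi⟩ := exists_eq_ciSup_of_finite (f := hM.eigenvalues)
  refine ⟨hM.eigenvectorBasis i, ?_, hi ▸ hM.mulVec_eigenvectorBasis i⟩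
  have h := real_inner_self_eq_norm_sq (hM.eigenvectorBasis i)
  rw [hM.eigenvectorBasis.orthonormal.1 i, one_pow, EuclideanSpace.inner_eq_star_dotProduct] at h
  simpa using h

lemma isGreatest_transpose_mulVec_dotProduct_self [DecidableEq n] [Nonempty n] {k : Type*}
    {B : Matrix m n ℝ} {U : Matrix n n ℝ} (hU : U.IsHermitian) (hBU : Bᵀ * B = U - 1)
    {C : Matrix k m ℝ} (hCB : C * B = 0) (hker : ∃ τ ≠ 0, C *ᵥ τ = 0) :
    IsGreatest {v | ∃ τ, τ ⬝ᵥ τ = 1 ∧ C *ᵥ τ = 0 ∧ v = (Bᵀ *ᵥ τ) ⬝ᵥ (Bᵀ *ᵥ τ)}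
      ((⨆ i, hU.eigenvalues i) - 1) := by
  set lam := ⨆ i, hU.eigenvalues i
  obtain ⟨v₀, hv₀, hUv₀⟩ := hU.exists_mulVec_eq_iSup_eigenvalues_smul
  have hBBv₀ : Bᵀ *ᵥ (B *ᵥ v₀) = (lam - 1) • v₀ := by
    rw [mulVec_mulVec, hBU, sub_mulVec, hUv₀, one_mulVec, sub_smul, one_smul]
  have hBv₀ : (B *ᵥ v₀) ⬝ᵥ (B *ᵥ v₀) = lam - 1 := by
    rw [mulVec_dotProduct, hBBv₀, dotProduct_smul, hv₀, smul_eq_mul, mul_one]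
  have hlam : 0 ≤ lam - 1 := hBv₀ ▸ dotProduct_self_nonneg _
  have hbound : ∀ τ, (Bᵀ *ᵥ τ) ⬝ᵥ (Bᵀ *ᵥ τ) ≤ (lam - 1) * (τ ⬝ᵥ τ) :=
    transpose_mulVec_dotProduct_le hlam fun x ↦ by
      rw [mulVec_dotProduct_mulVec, hBU, sub_mulVec, dotProduct_sub, one_mulVec, sub_mul, one_mul]
      linarith [hU.dotProduct_mulVec_le_iSup_eigenvalues x]
  refine ⟨?_, fun _ ⟨τ, hτ, _, hv⟩ ↦ hv ▸ by simpa [hτ] using hbound τ⟩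
  rcases eq_or_ne (B *ᵥ v₀) 0 with hz | hz
  · obtain ⟨τ, hτ, hCτ⟩ := hker
    obtain ⟨c, hc⟩ := exists_smul_dotProduct_self_eq_one hτ
    refine ⟨c • τ, hc, by rw [mulVec_smul, hCτ, smul_zero], le_antisymm ?_ ?_⟩
    · rw [← hBv₀, hz, dotProduct_zero]
      exact dotProduct_self_nonneg _
    · simpa [hc] using hbound (c • τ)
  · obtain ⟨c, hc⟩ := exists_smul_dotProduct_self_eq_one hz
    refine ⟨c • B *ᵥ v₀, hc, by rw [mulVec_smul, mulVec_mulVec, hCB, zero_mulVec, smul_zero], ?_⟩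
    rw [smul_dotProduct, dotProduct_smul, hBv₀, smul_eq_mul, smul_eq_mul] at hc
    rw [mulVec_smul, hBBv₀, smul_smul, smul_dotProduct, dotProduct_smul, hv₀, smul_eq_mul,
      smul_eq_mul, mul_one]
    linear_combination (1 - lam) * hc

end Matrix

section OrthogonalPart

variable {m n : Type*} [Fintype m] [Fintype n] [DecidableEq n]

/-- Since `Qᵀ(DQR⁻¹) = 1` for `R = QᵀDQ`, this is the projection of `DQR⁻¹` onto `(range Q)ᗮ`
when `Q` has orthonormal columns. -/
noncomputable def orthogonalPart (Q : Matrix m n ℝ) (D : Matrix m m ℝ) : Matrix m n ℝ :=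
  D * Q * (Qᵀ * D * Q)⁻¹ - Q

variable {Q : Matrix m n ℝ} {D : Matrix m m ℝ}

lemma transpose_mul_orthogonalPart (hQ : Qᵀ * Q = 1) (hR : IsUnit (Qᵀ * D * Q)) :
    Qᵀ * orthogonalPart Q D = 0 := by
  rw [orthogonalPart, Matrix.mul_sub, ← Matrix.mul_assoc, ← Matrix.mul_assoc,
    mul_nonsing_inv _ ((isUnit_iff_isUnit_det _).mp hR), hQ, sub_self]

lemma transpose_orthogonalPart_mulVec (hD : D.IsSymm) {τ : m → ℝ} (hτ : Qᵀ *ᵥ τ = 0) :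
    (orthogonalPart Q D)ᵀ *ᵥ τ = (Qᵀ * D * Q)⁻¹ *ᵥ (Qᵀ * D) *ᵥ τ := by
  rw [orthogonalPart, transpose_sub, sub_mulVec, hτ, sub_zero, transpose_mul, transpose_mul,
    (hD.transpose_mul_mul Q).inv.eq, hD.eq, mulVec_mulVec]

lemma transpose_orthogonalPart_mul_self [DecidableEq m] (hQ : Qᵀ * Q = 1) (hD : D.IsSymm)
    (hR : IsUnit (Qᵀ * D * Q)) :
    (orthogonalPart Q D)ᵀ * orthogonalPart Q D =
      (Qᵀ * D * Q)⁻¹ * (Qᵀ * D ^ 2 * Q) * (Qᵀ * D * Q)⁻¹ - 1 := by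
  have hdet := (isUnit_iff_isUnit_det _).mp hR
  have hQA : Qᵀ * (D * Q * (Qᵀ * D * Q)⁻¹) = 1 := by
    rw [← Matrix.mul_assoc, ← Matrix.mul_assoc, mul_nonsing_inv _ hdet]
  have hAt : (D * Q * (Qᵀ * D * Q)⁻¹)ᵀ = (Qᵀ * D * Q)⁻¹ * (Qᵀ * D) := by
    rw [transpose_mul, transpose_mul, (hD.transpose_mul_mul Q).inv.eq, hD.eq]
  have hAQ : (D * Q * (Qᵀ * D * Q)⁻¹)ᵀ * Q = 1 := by
    rw [hAt, Matrix.mul_assoc, nonsing_inv_mul _ hdet]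
  rw [orthogonalPart, transpose_sub, Matrix.sub_mul, Matrix.mul_sub, Matrix.mul_sub, hQA, hAQ, hQ,
    hAt, sq]
  simp only [Matrix.mul_assoc]
  abel

lemma transpose_orthogonalPart_mulVec_dotProduct_self (hD : D.IsSymm) {τ : m → ℝ}
    (hτ : Qᵀ *ᵥ τ = 0) :
    ((orthogonalPart Q D)ᵀ *ᵥ τ) ⬝ᵥ ((orthogonalPart Q D)ᵀ *ᵥ τ) =
      ((Qᵀ * D) *ᵥ τ) ⬝ᵥ (((Qᵀ * D * Q)⁻¹ * (Qᵀ * D * Q)⁻¹) *ᵥ ((Qᵀ * D) *ᵥ τ)) := by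
  rw [transpose_orthogonalPart_mulVec hD hτ, mulVec_dotProduct_mulVec,
    (hD.transpose_mul_mul Q).inv.eq]

end OrthogonalPart

theorem stmt_3_general {N p : ℕ} (hp : 0 < p) (hNp : p < N)
    (Q : Matrix (Fin N) (Fin p) ℝ) (hQ : Qᵀ * Q = 1)
    (d : Fin N → ℝ)
    (R S : Matrix (Fin p) (Fin p) ℝ)
    (hR : R = Qᵀ * Matrix.diagonal d * Q)
    (hS : S = Qᵀ * Matrix.diagonal d ^ 2 * Q)
    (hRinv : IsUnit R)
    (hU : (R⁻¹ * S * R⁻¹).IsHermitian) :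
    IsGreatest
      {v : ℝ | ∃ τ : Fin N → ℝ, (∑ i, τ i ^ 2 = 1) ∧ Qᵀ *ᵥ τ = 0 ∧
        v = ((Qᵀ * Matrix.diagonal d) *ᵥ τ) ⬝ᵥ ((R⁻¹ * R⁻¹) *ᵥ ((Qᵀ * Matrix.diagonal d) *ᵥ τ))}
      ((⨆ i, hU.eigenvalues i) - 1) := by
  subst hR hS
  have : Nonempty (Fin p) := ⟨⟨0, hp⟩⟩
  have hD := isSymm_diagonal d
  convert isGreatest_transpose_mulVec_dotProduct_self hU
    (transpose_orthogonalPart_mul_self hQ hD hRinv) (transpose_mul_orthogonalPart hQ hRinv)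
    (exists_ne_zero_mulVec_eq_zero (by simpa using hNp)) using 1
  ext v
  refine exists_congr fun τ ↦ and_congr (by simp [dotProduct, sq]) (and_congr_right fun hτ ↦ ?_)
  rw [transpose_orthogonalPart_mulVec_dotProduct_self hD hτ]

/-- the maximum over unit vectors τ orthogonal to the columns of Q
of the quadratic form (QᵀDτ)ᵀ R⁻² (QᵀDτ) is attained and equals
λ_max(R⁻¹ S R⁻¹) − 1, where R = QᵀDQ, S = QᵀD²Q. -/
theorem stmt_3 {N p : ℕ} (hp : 0 < p) (hNp : p < N)
    (Q : Matrix (Fin N) (Fin p) ℝ) (hQ : Qᵀ * Q = 1)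
    (d : Fin N → ℝ) (hd : ∀ i, 0 ≤ d i)
    (R S : Matrix (Fin p) (Fin p) ℝ)
    (hR : R = Qᵀ * Matrix.diagonal d * Q)
    (hS : S = Qᵀ * Matrix.diagonal d ^ 2 * Q)
    (hRinv : IsUnit R)
    (hU : (R⁻¹ * S * R⁻¹).IsHermitian) :
    IsGreatest
      {v : ℝ | ∃ τ : Fin N → ℝ, (∑ i, τ i ^ 2 = 1) ∧ Qᵀ *ᵥ τ = 0 ∧
        v = ((Qᵀ * Matrix.diagonal d) *ᵥ τ) ⬝ᵥ ((R⁻¹ * R⁻¹) *ᵥ ((Qᵀ * Matrix.diagonal d) *ᵥ τ))}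
      ((⨆ i, hU.eigenvalues i) - 1) :=
  stmt_3_general hp hNp Q hQ d R S hR hS hRinv hU
end

section
/- Let φ(x) = exp(−x²/2)/√(2π) be the standard normal density, Φ its cumulative distribution function, and for c > 0 define G(c) = (1 − 2cφ(c) + 2(c² − 1)Φ(−c)) / (1 − 2Φ(−c))². Then G is strictly decreasing on (0, ∞): for 0 < c₁ < c₂, G(c₂) < G(c₁). -/
/-!
With D(c) = 1 − 2Φ(−c) = ∫_{−c}^{c} φ, differentiating gives
G′(c) = −4 (φ(c) − cΦ(−c)) (D(c) − 2cφ(c)) / D(c)³,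
and both factors are positive for c > 0. Since φ′(t) = −tφ(t), the first is
∫_{−∞}^{−c} (−t − c) φ(t) dt (the Mills-ratio bound); the second is
∫_{−c}^{c} (φ(t) − φ(c)) dt, positive because φ decreases in |t|.
-/

open MeasureTheory

/-- The standard normal density φ(x) = exp(−x²/2)/√(2π). -/
noncomputable def stdPdf (x : ℝ) : ℝ := Real.exp (-x ^ 2 / 2) / Real.sqrt (2 * Real.pi)

/-- The standard normal cumulative distribution function Φ(x) = ∫_{−∞}^x φ. -/
noncomputable def stdCdf (x : ℝ) : ℝ := ∫ t in Set.Iic x, stdPdf t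

/-- G(c): the asymptotic variance of the Huber M-estimate of location with
tuning constant c, under standard normal errors. -/
noncomputable def huberVar (c : ℝ) : ℝ :=
  (1 - 2 * c * stdPdf c + 2 * (c ^ 2 - 1) * stdCdf (-c)) / (1 - 2 * stdCdf (-c)) ^ 2

open Set Filter Real Topology ProbabilityTheory

section IntegralIic

variable {E : Type*} [NormedAddCommGroup E] [NormedSpace ℝ E] {f : ℝ → E}

theorem hasDerivAt_integral_Iic [CompleteSpace E] (hf : Integrable f) (hfc : Continuous f)
    (x : ℝ) : HasDerivAt (fun u => ∫ t in Iic u, f t) (f x) x := by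
  have hsplit : (fun u => ∫ t in Iic u, f t) =
      fun u => (∫ t in Iic 0, f t) + ∫ t in (0 : ℝ)..u, f t := by
    funext u
    rw [← intervalIntegral.integral_Iic_sub_Iic hf.integrableOn hf.integrableOn, add_sub_cancel]
  rw [hsplit]
  exact (intervalIntegral.integral_hasDerivAt_right hf.intervalIntegrable
    (hfc.stronglyMeasurableAtFilter _ _) hfc.continuousAt).const_add _

theorem integral_Iic_neg_of_even (hf : Integrable f) (heven : ∀ t, f (-t) = f t) (x : ℝ) :
    ∫ t in Iic (-x), f t = (∫ t, f t) - ∫ t in Iic x, f t := by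
  have hrefl : ∫ t in Iic x, f t = ∫ t in Ioi (-x), f t := by
    simpa only [heven] using integral_comp_neg_Iic x f
  rw [hrefl, ← intervalIntegral.integral_Iic_add_Ioi hf.integrableOn hf.integrableOn,
    add_sub_cancel_right]

end IntegralIic

theorem stdPdf_eq_gaussianPDFReal : stdPdf = gaussianPDFReal 0 1 := by
  funext x
  simp [stdPdf, gaussianPDFReal, div_eq_inv_mul]

theorem stdPdf_pos (x : ℝ) : 0 < stdPdf x := by
  rw [stdPdf_eq_gaussianPDFReal]; exact gaussianPDFReal_pos _ _ _ one_ne_zero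

theorem stdPdf_neg (x : ℝ) : stdPdf (-x) = stdPdf x := by simp [stdPdf]

theorem continuous_stdPdf : Continuous stdPdf := by
  unfold stdPdf; fun_prop

theorem integrable_stdPdf : Integrable stdPdf := by
  rw [stdPdf_eq_gaussianPDFReal]; exact integrable_gaussianPDFReal _ _

theorem integral_stdPdf : ∫ x, stdPdf x = 1 := by
  rw [stdPdf_eq_gaussianPDFReal]; exact integral_gaussianPDFReal_eq_one _ one_ne_zero

theorem integrable_mul_stdPdf : Integrable fun x => x * stdPdf x := by
  refine ((integrable_mul_exp_neg_mul_sq (b := 1 / 2) (by norm_num)).div_const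
    √(2 * π)).congr (Eventually.of_forall fun x => ?_)
  simp only [stdPdf]; ring_nf

theorem hasDerivAt_stdPdf (x : ℝ) : HasDerivAt stdPdf (-x * stdPdf x) x := by
  have hexp : HasDerivAt (fun y : ℝ => -y ^ 2 / 2) (-x) x :=
    ((hasDerivAt_pow 2 x).neg.div_const 2).congr_deriv (by push_cast; ring)
  exact (hexp.exp.div_const √(2 * π)).congr_deriv (by rw [stdPdf]; ring)

theorem tendsto_stdPdf_atBot : Tendsto stdPdf atBot (𝓝 0) := by
  have hsq : Tendsto (fun x : ℝ => -x ^ 2 / 2) atBot atBot :=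
    (tendsto_neg_atTop_atBot.comp ((tendsto_pow_atTop two_ne_zero).comp
      tendsto_neg_atBot_atTop)).atBot_div_const two_pos |>.congr fun x => by simp
  have := (tendsto_exp_atBot.comp hsq).div_const √(2 * π)
  rwa [zero_div] at this

theorem integral_Iic_neg_mul_stdPdf (a : ℝ) : ∫ t in Iic a, -t * stdPdf t = stdPdf a := by
  simpa using integral_Iic_of_hasDerivAt_of_tendsto' (fun x _ => hasDerivAt_stdPdf x)
    (by simpa [neg_mul] using integrable_mul_stdPdf.neg.integrableOn) tendsto_stdPdf_atBot

theorem hasDerivAt_stdCdf (x : ℝ) : HasDerivAt stdCdf (stdPdf x) x :=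
  hasDerivAt_integral_Iic integrable_stdPdf continuous_stdPdf x

theorem stdCdf_neg (x : ℝ) : stdCdf (-x) = 1 - stdCdf x := by
  simp only [stdCdf]
  rw [integral_Iic_neg_of_even integrable_stdPdf stdPdf_neg, integral_stdPdf]

theorem one_sub_two_mul_stdCdf_neg (c : ℝ) :
    1 - 2 * stdCdf (-c) = ∫ t in (-c)..c, stdPdf t := by
  rw [← intervalIntegral.integral_Iic_sub_Iic integrable_stdPdf.integrableOn
    integrable_stdPdf.integrableOn, ← stdCdf, ← stdCdf, stdCdf_neg]
  ring

theorem stdPdf_lt_stdPdf_of_sq_lt {x y : ℝ} (h : x ^ 2 < y ^ 2) : stdPdf y < stdPdf x := by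
  unfold stdPdf
  gcongr

theorem two_mul_mul_stdPdf_lt {c : ℝ} (hc : 0 < c) :
    2 * c * stdPdf c < 1 - 2 * stdCdf (-c) := by
  have hpos : 0 < ∫ t in (-c)..c, (stdPdf t - stdPdf c) :=
    intervalIntegral.intervalIntegral_pos_of_pos_on
      ((continuous_stdPdf.sub continuous_const).intervalIntegrable _ _)
      (fun t ht => sub_pos.2 <| stdPdf_lt_stdPdf_of_sq_lt <| by nlinarith [ht.1, ht.2])
      (by linarith)
  rw [intervalIntegral.integral_sub (continuous_stdPdf.intervalIntegrable _ _)
    intervalIntegrable_const, intervalIntegral.integral_const, smul_eq_mul,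
    ← one_sub_two_mul_stdCdf_neg] at hpos
  linarith

theorem one_sub_two_mul_stdCdf_neg_pos {c : ℝ} (hc : 0 < c) : 0 < 1 - 2 * stdCdf (-c) :=
  lt_trans (by have := stdPdf_pos c; positivity) (two_mul_mul_stdPdf_lt hc)

theorem mul_stdCdf_neg_lt_stdPdf (c : ℝ) : c * stdCdf (-c) < stdPdf c := by
  have hint : IntegrableOn (fun t => -t * stdPdf t) (Iic (-c)) := by
    simpa [neg_mul] using integrable_mul_stdPdf.neg.integrableOn
  have hgap : stdPdf c - c * stdCdf (-c) = ∫ t in Iic (-c), (-t - c) * stdPdf t := by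
    rw [← stdPdf_neg, ← integral_Iic_neg_mul_stdPdf, stdCdf, ← integral_const_mul,
      ← integral_sub hint (integrable_stdPdf.integrableOn.const_mul c)]
    simp only [sub_mul]
  suffices 0 < ∫ t in Iic (-c), (-t - c) * stdPdf t by linarith
  rw [setIntegral_pos_iff_support_of_nonneg_ae]
  · refine lt_of_lt_of_le (by simp) (measure_mono (s := Iio (-c)) fun t ht => ⟨?_, ht.out.le⟩)
    exact (mul_pos (by linarith [ht.out]) (stdPdf_pos t)).ne'
  · exact (ae_restrict_iff' measurableSet_Iic).2 <| Eventually.of_forall fun t ht =>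
      mul_nonneg (by linarith [ht.out]) (stdPdf_pos t).le
  · exact (hint.sub (integrable_stdPdf.integrableOn.const_mul c)).congr_fun
      (fun t _ => by simp only [Pi.sub_apply]; ring) measurableSet_Iic

theorem hasDerivAt_huberVar {c : ℝ} (hD : 1 - 2 * stdCdf (-c) ≠ 0) :
    HasDerivAt huberVar
      (-4 * (stdPdf c - c * stdCdf (-c)) * (1 - 2 * stdCdf (-c) - 2 * c * stdPdf c) /
        (1 - 2 * stdCdf (-c)) ^ 3) c := by
  have hΦ : HasDerivAt (fun x => stdCdf (-x)) (-stdPdf c) c :=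
    ((hasDerivAt_stdCdf (-c)).comp c (hasDerivAt_neg c)).congr_deriv (by simp [stdPdf_neg])
  have hnum : HasDerivAt (fun x => 1 - 2 * x * stdPdf x + 2 * (x ^ 2 - 1) * stdCdf (-x))
      (4 * c * stdCdf (-c)) c :=
    (((((hasDerivAt_id c).const_mul 2).mul (hasDerivAt_stdPdf c)).const_sub 1).add
      ((((hasDerivAt_pow 2 c).sub_const 1).const_mul 2).mul hΦ)).congr_deriv
      (by simp only [id_eq]; push_cast; ring)
  have hden : HasDerivAt (fun x => (1 - 2 * stdCdf (-x)) ^ 2)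
      (2 * (1 - 2 * stdCdf (-c)) * (2 * stdPdf c)) c :=
    (((hΦ.const_mul 2).const_sub 1).pow 2).congr_deriv (by push_cast; ring)
  refine (hnum.div hden (pow_ne_zero 2 hD)).congr_deriv ?_
  field_simp
  ring

theorem strictAntiOn_huberVar : StrictAntiOn huberVar (Ioi 0) := by
  refine strictAntiOn_of_deriv_neg (convex_Ioi 0) (fun c hc => ?_) (fun c hc => ?_)
  · exact (hasDerivAt_huberVar (one_sub_two_mul_stdCdf_neg_pos hc).ne').continuousAt
      |>.continuousWithinAt
  rw [interior_Ioi] at hc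
  have hD := one_sub_two_mul_stdCdf_neg_pos hc
  have hmills := sub_pos.2 (mul_stdCdf_neg_lt_stdPdf c)
  have hmoment := sub_pos.2 (two_mul_mul_stdPdf_lt hc)
  rw [(hasDerivAt_huberVar hD.ne').deriv]
  exact div_neg_of_neg_of_pos (by nlinarith [mul_pos hmills hmoment]) (pow_pos hD 3)

/-- G is strictly decreasing on (0, ∞). -/
theorem stmt_13 (c₁ c₂ : ℝ) (h₁ : 0 < c₁) (h₁₂ : c₁ < c₂) :
    huberVar c₂ < huberVar c₁ :=
  strictAntiOn_huberVar h₁ (h₁.trans h₁₂) h₁₂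
end

section
/- Let f_1, …, f_N ∈ ℝ^p, let w_1, …, w_N ≥ 0 with Σ_i w_i = 1, and suppose M_0 = Σ_i w_i f_i f_iᵀ is invertible with smallest eigenvalue at least A > 0. Let n ≥ 1 and let τ_1, …, τ_N ∈ ℝ satisfy Σ_i τ_i² ≤ κ²/n. Then for every index k, |√n τ_k − √n f_kᵀ M_0^{-1} Σ_i w_i f_i τ_i| ≤ κ (1 + max_i ‖f_i‖² / A). -/
open Matrix BigOperators

private lemma sq_le_imp_le {a c : ℝ} (_ha : 0 ≤ a) (hc : 0 ≤ c) (h : a ^ 2 ≤ c ^ 2) :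
    a ≤ c := by
  nlinarith [sq_nonneg (a - c), sq_nonneg (a + c)]

private lemma dot_cs {q : ℕ} (x y : Fin q → ℝ) : (x ⬝ᵥ y) ^ 2 ≤ (x ⬝ᵥ x) * (y ⬝ᵥ y) := by
  have h := Finset.sum_mul_sq_le_sq_mul_sq Finset.univ x y
  simpa [dotProduct, sq] using h

/-- uniform boundedness of √n h(x_k) = √n τ_k − √n f_kᵀ M₀⁻¹ b₀,
where M₀ = Σᵢ wᵢ fᵢfᵢᵀ has smallest eigenvalue at least A > 0 (expressed via
the Rayleigh quotient) and b₀ = Σᵢ wᵢ fᵢ τᵢ, under Σᵢ τᵢ² ≤ κ²/n. -/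
theorem stmt_19 {N p : ℕ} (f : Fin N → Fin p → ℝ) (w : Fin N → ℝ)
    (hw : ∀ i, 0 ≤ w i) (hw1 : ∑ i, w i = 1)
    (M₀ : Matrix (Fin p) (Fin p) ℝ)
    (hM₀ : M₀ = ∑ i, w i • Matrix.vecMulVec (f i) (f i))
    (hMinv : IsUnit M₀)
    (A : ℝ) (hA : 0 < A)
    (heig : ∀ x : Fin p → ℝ, A * (x ⬝ᵥ x) ≤ x ⬝ᵥ (M₀ *ᵥ x))
    (n : ℕ) (hn : 1 ≤ n) (κ : ℝ) (hκ : 0 ≤ κ)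
    (τ : Fin N → ℝ) (hτ : ∑ i, τ i ^ 2 ≤ κ ^ 2 / n) :
    ∀ k : Fin N,
      |Real.sqrt n * τ k -
        Real.sqrt n * (f k ⬝ᵥ (M₀⁻¹ *ᵥ ∑ i, (w i * τ i) • f i))| ≤
      κ * (1 + (⨆ i : Fin N, ∑ j, f i j ^ 2) / A) := by
  intro k
  have hnpos : (0:ℝ) < n := by exact_mod_cast Nat.lt_of_lt_of_le Nat.zero_lt_one hn
  have hsn : (0:ℝ) < Real.sqrt n := Real.sqrt_pos.mpr hnpos
  obtain ⟨b, hb⟩ : ∃ b : Fin p → ℝ, b = ∑ i, (w i * τ i) • f i := ⟨_, rfl⟩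
  obtain ⟨u, hu⟩ : ∃ u : Fin p → ℝ, u = M₀⁻¹ *ᵥ b := ⟨_, rfl⟩
  rw [← hb, ← hu]
  have hdet : IsUnit M₀.det := (Matrix.isUnit_iff_isUnit_det M₀).mp hMinv
  have hMu : M₀ *ᵥ u = b := by
    rw [hu, Matrix.mulVec_mulVec, Matrix.mul_nonsing_inv _ hdet, Matrix.one_mulVec]
  obtain ⟨S, hS⟩ : ∃ S : ℝ, S = ⨆ i : Fin N, ∑ j, f i j ^ 2 := ⟨_, rfl⟩
  rw [← hS]
  have hSle : ∀ i, ∑ j, f i j ^ 2 ≤ S := by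
    intro i; rw [hS]
    exact le_ciSup (Finite.bddAbove_range (fun i : Fin N => ∑ j, f i j ^ 2)) i
  have hS0 : 0 ≤ S := le_trans (Finset.sum_nonneg fun j _ => sq_nonneg _) (hSle k)
  obtain ⟨T, hT⟩ : ∃ T : ℝ, T = ∑ i, τ i ^ 2 := ⟨_, rfl⟩
  rw [← hT] at hτ
  have hT0 : 0 ≤ T := hT ▸ Finset.sum_nonneg fun i _ => sq_nonneg _
  obtain ⟨U, hU⟩ : ∃ U : ℝ, U = u ⬝ᵥ u := ⟨_, rfl⟩
  have hU0 : 0 ≤ U := hU ▸ Finset.sum_nonneg fun j _ => mul_self_nonneg _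
  have hff : ∀ i, f i ⬝ᵥ f i ≤ S := by
    intro i
    calc f i ⬝ᵥ f i = ∑ j, f i j ^ 2 := by simp [dotProduct, sq]
    _ ≤ S := hSle i
  -- expansion of u ⬝ᵥ b
  have hub : u ⬝ᵥ b = ∑ i, (w i * τ i) * (u ⬝ᵥ f i) := by
    have h1 : u ⬝ᵥ b = ∑ j, ∑ i, u j * ((w i * τ i) * f i j) := by
      simp [hb, dotProduct, Finset.sum_apply, Finset.mul_sum]
    rw [h1, Finset.sum_comm]
    refine Finset.sum_congr rfl fun i _ => ?_
    simp [dotProduct, Finset.mul_sum, mul_left_comm, mul_comm, mul_assoc]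
  -- Rayleigh lower bound
  have hAU : A * U ≤ u ⬝ᵥ b := by
    have := heig u
    rwa [hMu, ← hU] at this
  have hub0 : 0 ≤ u ⬝ᵥ b := le_trans (mul_nonneg hA.le hU0) hAU
  -- weighted Cauchy-Schwarz: (u ⬝ᵥ b)^2 ≤ T * (S * U)
  have hw1' : ∀ i, w i ≤ 1 := by
    intro i
    rw [← hw1]
    exact Finset.single_le_sum (fun j _ => hw j) (Finset.mem_univ i)
  have hub2 : (u ⬝ᵥ b) ^ 2 ≤ T * (S * U) := by
    have hcs := Finset.sum_mul_sq_le_sq_mul_sq Finset.univ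
      (fun i => Real.sqrt (w i) * τ i) (fun i => Real.sqrt (w i) * (u ⬝ᵥ f i))
    have he : ∀ i : Fin N, (Real.sqrt (w i) * τ i) * (Real.sqrt (w i) * (u ⬝ᵥ f i))
        = (w i * τ i) * (u ⬝ᵥ f i) := by
      intro i
      calc (Real.sqrt (w i) * τ i) * (Real.sqrt (w i) * (u ⬝ᵥ f i))
          = (Real.sqrt (w i) * Real.sqrt (w i)) * (τ i * (u ⬝ᵥ f i)) := by ring
      _ = w i * (τ i * (u ⬝ᵥ f i)) := by rw [Real.mul_self_sqrt (hw i)]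
      _ = (w i * τ i) * (u ⬝ᵥ f i) := by ring
    have hsum1 : ∑ i, (Real.sqrt (w i) * τ i) ^ 2 ≤ T := by
      rw [hT]
      refine Finset.sum_le_sum fun i _ => ?_
      have : Real.sqrt (w i) ^ 2 = w i := Real.sq_sqrt (hw i)
      have h2 : (Real.sqrt (w i) * τ i) ^ 2 = w i * τ i ^ 2 := by
        rw [mul_pow, this]
      rw [h2]
      nlinarith [hw1' i, sq_nonneg (τ i)]
    have hsum2 : ∑ i, (Real.sqrt (w i) * (u ⬝ᵥ f i)) ^ 2 ≤ S * U := by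
      have hper : ∀ i : Fin N, (Real.sqrt (w i) * (u ⬝ᵥ f i)) ^ 2 ≤ w i * (S * U) := by
        intro i
        have h2 : (Real.sqrt (w i) * (u ⬝ᵥ f i)) ^ 2 = w i * (u ⬝ᵥ f i) ^ 2 := by
          rw [mul_pow, Real.sq_sqrt (hw i)]
        rw [h2]
        have h3 : (u ⬝ᵥ f i) ^ 2 ≤ U * S := by
          calc (u ⬝ᵥ f i) ^ 2 ≤ (u ⬝ᵥ u) * (f i ⬝ᵥ f i) := dot_cs u (f i)
          _ = U * (f i ⬝ᵥ f i) := by rw [hU]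
          _ ≤ U * S := mul_le_mul_of_nonneg_left (hff i) hU0
        calc w i * (u ⬝ᵥ f i) ^ 2 ≤ w i * (U * S) := mul_le_mul_of_nonneg_left h3 (hw i)
        _ = w i * (S * U) := by ring
      calc ∑ i, (Real.sqrt (w i) * (u ⬝ᵥ f i)) ^ 2 ≤ ∑ i, w i * (S * U) :=
            Finset.sum_le_sum fun i _ => hper i
      _ = S * U := by rw [← Finset.sum_mul, hw1, one_mul]
    calc (u ⬝ᵥ b) ^ 2 = (∑ i, (Real.sqrt (w i) * τ i) * (Real.sqrt (w i) * (u ⬝ᵥ f i))) ^ 2 := by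
          rw [hub]
          congr 1
          exact (Finset.sum_congr rfl fun i _ => he i).symm
    _ ≤ (∑ i, (Real.sqrt (w i) * τ i) ^ 2) * ∑ i, (Real.sqrt (w i) * (u ⬝ᵥ f i)) ^ 2 := hcs
    _ ≤ T * (S * U) := by
          apply mul_le_mul hsum1 hsum2 (Finset.sum_nonneg fun i _ => sq_nonneg _) hT0
  -- deduce A^2 * U ≤ T * S
  have hA2U : A ^ 2 * U ≤ T * S := by
    rcases eq_or_lt_of_le hU0 with h0 | hUpos
    · rw [← h0, mul_zero]
      exact mul_nonneg hT0 hS0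
    · have h1 : (A * U) ^ 2 ≤ (u ⬝ᵥ b) ^ 2 := by
        apply pow_le_pow_left₀ (mul_nonneg hA.le hU0) hAU
      have h2 : A ^ 2 * U ^ 2 ≤ T * (S * U) := by nlinarith
      nlinarith
  -- bound on (f k ⬝ᵥ u)^2
  have hfu2 : (f k ⬝ᵥ u) ^ 2 ≤ S ^ 2 * T / A ^ 2 := by
    have h1 : (f k ⬝ᵥ u) ^ 2 ≤ S * U := by
      calc (f k ⬝ᵥ u) ^ 2 ≤ (f k ⬝ᵥ f k) * (u ⬝ᵥ u) := dot_cs (f k) u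
      _ = (f k ⬝ᵥ f k) * U := by rw [hU]
      _ ≤ S * U := mul_le_mul_of_nonneg_right (hff k) hU0
    have hU2 : U ≤ T * S / A ^ 2 := by
      rw [le_div_iff₀ (by positivity)]
      linarith [hA2U]
    calc (f k ⬝ᵥ u) ^ 2 ≤ S * (T * S / A ^ 2) := le_trans h1
          (mul_le_mul_of_nonneg_left hU2 hS0)
    _ = S ^ 2 * T / A ^ 2 := by ring
  -- |τ k| bound
  have hτk : Real.sqrt n * |τ k| ≤ κ := by
    apply sq_le_imp_le (mul_nonneg hsn.le (abs_nonneg _)) hκ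
    have h1 : τ k ^ 2 ≤ T := by
      rw [hT]
      exact Finset.single_le_sum (fun i _ => sq_nonneg (τ i)) (Finset.mem_univ k)
    have h2 : (Real.sqrt n * |τ k|) ^ 2 = n * τ k ^ 2 := by
      rw [mul_pow, Real.sq_sqrt hnpos.le, sq_abs]
    rw [h2]
    have h3 : T ≤ κ ^ 2 / n := hτ
    calc (n:ℝ) * τ k ^ 2 ≤ n * (κ ^ 2 / n) :=
          mul_le_mul_of_nonneg_left (h1.trans h3) hnpos.le
    _ = κ ^ 2 := by field_simp
  -- |f k ⬝ᵥ u| bound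
  have hfu : Real.sqrt n * |f k ⬝ᵥ u| ≤ κ * (S / A) := by
    apply sq_le_imp_le (mul_nonneg hsn.le (abs_nonneg _)) (mul_nonneg hκ (div_nonneg hS0 hA.le))
    have h2 : (Real.sqrt n * |f k ⬝ᵥ u|) ^ 2 = n * (f k ⬝ᵥ u) ^ 2 := by
      rw [mul_pow, Real.sq_sqrt hnpos.le, sq_abs]
    have hc : (f k ⬝ᵥ u) ^ 2 * A ^ 2 ≤ S ^ 2 * T := (le_div_iff₀ (by positivity)).mp hfu2
    have hTn : T * n ≤ κ ^ 2 := (le_div_iff₀ hnpos).mp hτ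
    have hc' : (n:ℝ) * ((f k ⬝ᵥ u) ^ 2 * A ^ 2) ≤ n * (S ^ 2 * T) :=
      mul_le_mul_of_nonneg_left hc hnpos.le
    have hTn' : S ^ 2 * (T * n) ≤ S ^ 2 * κ ^ 2 :=
      mul_le_mul_of_nonneg_left hTn (sq_nonneg S)
    have hgoal : (n:ℝ) * (f k ⬝ᵥ u) ^ 2 * A ^ 2 ≤ κ ^ 2 * S ^ 2 := by
      calc (n:ℝ) * (f k ⬝ᵥ u) ^ 2 * A ^ 2 = n * ((f k ⬝ᵥ u) ^ 2 * A ^ 2) := by ring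
      _ ≤ n * (S ^ 2 * T) := hc'
      _ = S ^ 2 * (T * n) := by ring
      _ ≤ S ^ 2 * κ ^ 2 := hTn'
      _ = κ ^ 2 * S ^ 2 := by ring
    have heq : (κ * (S / A)) ^ 2 = κ ^ 2 * S ^ 2 / A ^ 2 := by ring
    rw [h2, heq, le_div_iff₀ (by positivity : (0:ℝ) < A ^ 2)]
    exact hgoal
  -- assemble
  have htri : |Real.sqrt n * τ k - Real.sqrt n * (f k ⬝ᵥ u)| ≤
      |Real.sqrt n * τ k| + |Real.sqrt n * (f k ⬝ᵥ u)| := by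
    rw [sub_eq_add_neg]
    refine (abs_add_le _ _).trans ?_
    rw [abs_neg]
  have h1 : |Real.sqrt n * τ k| = Real.sqrt n * |τ k| := by
    rw [abs_mul, abs_of_pos hsn]
  have h2 : |Real.sqrt n * (f k ⬝ᵥ u)| = Real.sqrt n * |f k ⬝ᵥ u| := by
    rw [abs_mul, abs_of_pos hsn]
  have hfin : κ * (1 + S / A) = κ + κ * (S / A) := by ring
  rw [hfin]
  calc |Real.sqrt n * τ k - Real.sqrt n * (f k ⬝ᵥ u)| ≤
      |Real.sqrt n * τ k| + |Real.sqrt n * (f k ⬝ᵥ u)| := htri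
  _ = Real.sqrt n * |τ k| + Real.sqrt n * |f k ⬝ᵥ u| := by rw [h1, h2]
  _ ≤ κ + κ * (S / A) := add_le_add hτk hfu
end
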